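/- arXiv:1504.06849 — 2 statements merged into one kernel-verified Lean document; each statement's English description precedes it below -/
import Mathlib

section
/- Let n be a positive integer and let S be a symmetric real n×n matrix such that −S is positive definite. Suppose that for all indices i ≠ j one has S i j ≥ 0, and moreover whenever S i j ≠ 0 one has (S i j)^2 ≥ (S i i) * (S j j). Then S is diagonal, i.e. S i j = 0 for all i ≠ j. -/
/-- Let `n` be a positive integer and let `S` be a symmetric real `n × n` matrix such
that `-S` is positive definite. Suppose that for all indices `i ≠ j` one has
`S i j ≥ 0`, and moreover whenever `S i j ≠ 0` one has `(S i j)^2 ≥ (S i i) * (S j j)`.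
Then `S` is diagonal, i.e. `S i j = 0` for all `i ≠ j`. -/
theorem negDef_large_offdiag_diagonal (n : ℕ) (hn : 0 < n)
    (S : Matrix (Fin n) (Fin n) ℝ) (hsymm : S.IsSymm) (hS : (-S).PosDef)
    (hnonneg : ∀ i j : Fin n, i ≠ j → 0 ≤ S i j)
    (hbig : ∀ i j : Fin n, i ≠ j → S i j ≠ 0 → (S i j) ^ 2 ≥ S i i * S j j) :
    ∀ i j : Fin n, i ≠ j → S i j = 0 := by
  intro i j hij
  by_contra h0
  have hji : S j i = S i j := by
    have := congrFun (congrFun hsymm i) j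
    simpa [Matrix.transpose_apply] using this
  have hii : S i i < 0 := by
    have := hS.dotProduct_mulVec_pos (x := Pi.single i 1) (by
      intro h
      have := congrFun h i
      simp at this)
    simp [Matrix.mulVec_single, dotProduct, Pi.single_apply] at this
    linarith
  have hbig' := hbig i j hij h0
  set a : ℝ := S i j with ha
  set b : ℝ := -(S i i) with hb
  set x : Fin n → ℝ := a • (Pi.single i 1 : Fin n → ℝ) + b • (Pi.single j 1 : Fin n → ℝ) with hx
  have hxne : x ≠ 0 := by
    intro h
    have : x i = 0 := by rw [h]; rfl
    simp [hx, Pi.single_apply, hij.symm] at this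
    tauto
  have hpos := hS.dotProduct_mulVec_pos hxne
  have hmv : ∀ k, ((-S).mulVec x) k = -(a * S k i + b * S k j) := by
    intro k
    simp [hx, Matrix.mulVec_add, Matrix.mulVec_smul, Matrix.mulVec_single,
      mul_comm]
    ring
  have hxi : x i = a := by simp [hx, Pi.single_apply, hij.symm]
  have hxj : x j = b := by simp [hx, Pi.single_apply, hij]
  have hdot : dotProduct (star x) ((-S).mulVec x) =
      x i * ((-S).mulVec x) i + x j * ((-S).mulVec x) j := by
    classical
    rw [star_trivial, dotProduct,
      ← Finset.sum_subset (Finset.subset_univ ({i, j} : Finset (Fin n)))]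
    · rw [Finset.sum_insert (by simp [hij]), Finset.sum_singleton]
    · intro k _ hk
      simp only [Finset.mem_insert, Finset.mem_singleton, not_or] at hk
      have hxk : x k = 0 := by
        simp [hx, Pi.single_apply, hk.1, hk.2]
      simp [hxk]
  rw [hdot, hxi, hxj, hmv i, hmv j, hji] at hpos
  have hkey : 0 ≤ (-S i i) * (a ^ 2 - S i i * S j j) :=
    mul_nonneg (by linarith) (by linarith)
  rw [ha, hb] at hpos
  rw [ha] at hkey
  nlinarith [hpos, hkey]
end

section
/- Let L ⊆ ℝⁿ be a compact convex set with 0 in its interior. Then for every β > 0 there exists ε > 0 with the following property: for every compact convex set K ⊆ L with vol(L \ K) < ε there exists δ > 0 such that L ⊆ (1+δ) • K and vol(((1+δ) • K) \ L) < β. -/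
open scoped Pointwise

open MeasureTheory

open scoped RealInnerProductSpace InnerProductSpace

set_option maxHeartbeats 1000000

/-- If `p` is a nearest point of a convex set `K` to `x`, then the vector `x - p`
makes an obtuse angle with every `k - p`, `k ∈ K`. -/
lemma aux_nearest_inner_le {F : Type*} [NormedAddCommGroup F] [InnerProductSpace ℝ F]
    {K : Set F} (hK : Convex ℝ K) {x p : F} (hp : p ∈ K)
    (hmin : ∀ k ∈ K, dist x p ≤ dist x k) :
    ∀ k ∈ K, ⟪x - p, k - p⟫_ℝ ≤ 0 := by
  haveI : Nonempty K := ⟨⟨p, hp⟩⟩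
  have h : ‖x - p‖ = ⨅ w : K, ‖x - w‖ := by
    refine le_antisymm (le_ciInf fun w => ?_) (ciInf_le (f := fun w : K => ‖x - w‖) ⟨0, ?_⟩ ⟨p, hp⟩)
    · simpa [dist_eq_norm] using hmin w w.2
    · rintro _ ⟨w, rfl⟩; exact norm_nonneg _
  exact (norm_eq_iInf_iff_real_inner_le_zero hK hp).1 h

/-- Let `L ⊆ ℝⁿ` be a compact convex set with `0` in its interior. Then for every
`β > 0` there exists `ε > 0` with the following property: for every compact convex
set `K ⊆ L` with `vol(L \ K) < ε` there exists `δ > 0` such that `L ⊆ (1+δ) • K`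
and `vol(((1+δ) • K) \ L) < β`. -/
theorem exists_dilation_approx_of_small_volume_diff (n : ℕ)
    (L : Set (EuclideanSpace ℝ (Fin n)))
    (hLcomp : IsCompact L) (hLconv : Convex ℝ L)
    (h0 : (0 : EuclideanSpace ℝ (Fin n)) ∈ interior L) :
    ∀ β : ℝ, 0 < β → ∃ ε : ℝ, 0 < ε ∧
      ∀ K : Set (EuclideanSpace ℝ (Fin n)), IsCompact K → Convex ℝ K → K ⊆ L →
        volume (L \ K) < ENNReal.ofReal ε →
        ∃ δ : ℝ, 0 < δ ∧ L ⊆ (1 + δ) • K ∧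
          volume ((1 + δ) • K \ L) < ENNReal.ofReal β := by
  intro β hβ
  -- a small ball inside L
  obtain ⟨r, hr, hballL⟩ : ∃ r > 0, Metric.closedBall (0 : EuclideanSpace ℝ (Fin n)) r ⊆ L :=
    (Metric.nhds_basis_closedBall.mem_iff).1 (mem_interior_iff_mem_nhds.1 h0)
  -- a big ball containing L
  obtain ⟨R0, hLR0⟩ := hLcomp.isBounded.subset_closedBall 0
  set R : ℝ := max R0 r with hRdef
  have hrR : r ≤ R := le_max_right _ _
  have hR : 0 < R := lt_of_lt_of_le hr hrR
  have hLR : L ⊆ Metric.closedBall (0 : EuclideanSpace ℝ (Fin n)) R :=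
    hLR0.trans (Metric.closedBall_subset_closedBall (le_max_left _ _))
  set V : ENNReal := volume (Metric.closedBall (0 : EuclideanSpace ℝ (Fin n)) R) with hVdef
  have hVfin : V ≠ ⊤ := (isCompact_closedBall _ _).measure_lt_top.ne
  -- choose δ > 0 with ofReal ((1+δ)^n - 1) * V < ofReal β
  set c : ℝ := β / (V.toReal + 1) with hcdef
  have hVtnn : (0 : ℝ) ≤ V.toReal := ENNReal.toReal_nonneg
  have hc0 : 0 < c := div_pos hβ (by positivity)
  have hcont : Filter.Tendsto (fun t : ℝ => (1 + t) ^ n) (nhds 0) (nhds 1) := by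
    have hcf : Continuous (fun t : ℝ => (1 + t) ^ n) := by continuity
    simpa using hcf.tendsto (0 : ℝ)
  have hev : ∀ᶠ t in nhds (0 : ℝ), (1 + t) ^ n < 1 + c :=
    hcont.eventually_lt_const (by linarith)
  obtain ⟨η, hη, hηlt⟩ := Metric.eventually_nhds_iff.1 hev
  set δ : ℝ := η / 2 with hδdef
  have hδ : 0 < δ := by positivity
  have hδpow : (1 + δ) ^ n < 1 + c := by
    apply hηlt
    rw [Real.dist_eq, sub_zero, abs_of_pos hδ]
    linarith
  have hδpow1 : (1 : ℝ) ≤ (1 + δ) ^ n := one_le_pow₀ (by linarith)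
  have hδV : ENNReal.ofReal ((1 + δ) ^ n - 1) * V < ENNReal.ofReal β := by
    calc ENNReal.ofReal ((1 + δ) ^ n - 1) * V
        = ENNReal.ofReal ((1 + δ) ^ n - 1) * ENNReal.ofReal V.toReal := by
          rw [ENNReal.ofReal_toReal hVfin]
      _ = ENNReal.ofReal (((1 + δ) ^ n - 1) * V.toReal) := by
          rw [ENNReal.ofReal_mul (by linarith)]
      _ < ENNReal.ofReal β := by
          apply (ENNReal.ofReal_lt_ofReal_iff hβ).2
          have h1 : ((1 + δ) ^ n - 1) * V.toReal ≤ c * V.toReal :=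
            mul_le_mul_of_nonneg_right (by linarith) hVtnn
          have h2 : c * V.toReal < c * (V.toReal + 1) := by nlinarith
          have h3 : c * (V.toReal + 1) = β := by
            rw [hcdef]; field_simp
          linarith
  -- the admissible distance gap
  set d0 : ℝ := min (r / 2) (δ * (r / 2)) with hd0def
  have hd0 : 0 < d0 := lt_min (by linarith) (by positivity)
  have hd0r : d0 ≤ r / 2 := min_le_left _ _
  have hd0δ : d0 ≤ δ * (r / 2) := min_le_right _ _
  -- the small radius used for ε
  set ρ : ℝ := r * d0 / (2 * (R + r)) with hρdef
  have hρ : 0 < ρ := by positivity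
  have hρr : ρ ≤ r := by
    rw [hρdef, div_le_iff₀ (by positivity)]
    nlinarith
  refine ⟨(volume (Metric.closedBall (0 : EuclideanSpace ℝ (Fin n)) ρ)).toReal, ?_, ?_⟩
  · exact ENNReal.toReal_pos ((Metric.measure_closedBall_pos volume _ hρ).ne')
      (isCompact_closedBall _ _).measure_lt_top.ne
  intro K hKcomp hKconv hKL hvolK
  rw [ENNReal.ofReal_toReal (isCompact_closedBall _ _).measure_lt_top.ne] at hvolK
  -- K is nonempty
  have hKne : K.Nonempty := by
    rcases Set.eq_empty_or_nonempty K with rfl | h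
    · exfalso
      have h1 : volume (Metric.closedBall (0 : EuclideanSpace ℝ (Fin n)) ρ) ≤ volume (Metric.closedBall (0 : EuclideanSpace ℝ (Fin n)) r) :=
        measure_mono (Metric.closedBall_subset_closedBall hρr)
      have h2 : volume (Metric.closedBall (0 : EuclideanSpace ℝ (Fin n)) r) ≤ volume L := measure_mono hballL
      have h3 : volume L ≤ volume (L \ ∅) := by simp
      exact absurd ((h1.trans h2).trans h3) (LT.lt.not_ge hvolK)
    · exact h
  -- every point of L is within d0 of K
  have hdist : ∀ x ∈ L, Metric.infDist x K ≤ d0 := by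
    intro x hx
    by_contra hlt
    push_neg at hlt
    obtain ⟨p, hpK, hpd⟩ := hKcomp.exists_infDist_eq_dist hKne x
    have hsep : ∀ k ∈ K, ⟪x - p, k - p⟫_ℝ ≤ 0 := by
      refine aux_nearest_inner_le hKconv hpK (fun k hk => ?_)
      rw [← hpd]; exact Metric.infDist_le_dist_of_mem hk
    set d : ℝ := dist x p with hddef
    have hd : d0 < d := hpd ▸ hlt
    set s : ℝ := d0 / (2 * (R + r)) with hsdef
    have hs : 0 < s := by positivity
    have hs1 : s ≤ 1 := by
      rw [hsdef, div_le_one (by positivity)]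
      nlinarith
    have hxR : ‖x‖ ≤ R := by simpa [Metric.mem_closedBall, dist_zero_right] using hLR hx
    -- the ball around (1-s) • x of radius s*r is inside L and misses K
    have hBL : Metric.closedBall ((1 - s) • x) (s * r) ⊆ L := by
      intro b hb
      set z : EuclideanSpace ℝ (Fin n) := s⁻¹ • (b - (1 - s) • x) with hzdef
      have hz : z ∈ Metric.closedBall (0 : EuclideanSpace ℝ (Fin n)) r := by
        rw [Metric.mem_closedBall, dist_zero_right, hzdef, norm_smul, norm_inv,
          Real.norm_eq_abs, abs_of_pos hs]
        rw [Metric.mem_closedBall, dist_eq_norm] at hb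
        rw [inv_mul_le_iff₀ hs]
        linarith [hb]
      have hcomb : (1 - s) • x + s • z = b := by
        rw [hzdef, smul_inv_smul₀ hs.ne']; abel
      have := hLconv hx (hballL hz) (show (0:ℝ) ≤ 1 - s by linarith) hs.le
        (show (1 - s) + s = 1 by ring)
      rwa [hcomb] at this
    have hBK : ∀ b ∈ Metric.closedBall ((1 - s) • x) (s * r), b ∉ K := by
      intro b hb hbK
      have h1 : ⟪x - p, b - p⟫_ℝ ≤ 0 := hsep b hbK
      have e0 : b - p = (x - p) + (b - x) := by abel
      have e1 : ⟪x - p, b - p⟫_ℝ = ‖x - p‖ ^ 2 + ⟪x - p, b - x⟫_ℝ := by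
        rw [e0, inner_add_right, real_inner_self_eq_norm_sq]
      have e2 : -(‖x - p‖ * ‖b - x‖) ≤ ⟪x - p, b - x⟫_ℝ :=
        (abs_le.1 (abs_real_inner_le_norm (x - p) (b - x))).1
      have e3 : ‖b - x‖ ≤ d0 / 2 := by
        have hbx : b - x = (b - (1 - s) • x) - s • x := by
          rw [sub_smul, one_smul]; abel
        rw [Metric.mem_closedBall, dist_eq_norm] at hb
        calc ‖b - x‖ = ‖(b - (1 - s) • x) - s • x‖ := by rw [hbx]
          _ ≤ ‖b - (1 - s) • x‖ + ‖s • x‖ := norm_sub_le _ _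
          _ ≤ s * r + s * R := by
              rw [norm_smul, Real.norm_eq_abs, abs_of_pos hs]
              exact add_le_add hb (mul_le_mul_of_nonneg_left hxR hs.le)
          _ = d0 / 2 := by rw [hsdef]; field_simp; ring
      have e4 : ‖x - p‖ = d := by rw [hddef, dist_eq_norm]
      rw [e4] at e1 e2
      nlinarith [norm_nonneg (b - x)]
    have hsub : Metric.closedBall ((1 - s) • x) (s * r) ⊆ L \ K :=
      fun b hb => ⟨hBL hb, hBK b hb⟩
    have hvolB : volume (Metric.closedBall ((1 - s) • x) (s * r)) =
        volume (Metric.closedBall (0 : EuclideanSpace ℝ (Fin n)) ρ) := by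
      rw [MeasureTheory.Measure.addHaar_closedBall_center]
      congr 1
      rw [hsdef, hρdef]; ring
    exact absurd ((measure_mono hsub).trans_lt hvolK) (by rw [hvolB]; exact lt_irrefl _)
  -- K contains the ball of radius r/2
  have hball2 : Metric.closedBall (0 : EuclideanSpace ℝ (Fin n)) (r / 2) ⊆ K := by
    intro y hy
    by_contra hyK
    obtain ⟨p, hpK, hpd⟩ := hKcomp.exists_infDist_eq_dist hKne y
    have hyp : y ≠ p := fun h => hyK (h ▸ hpK)
    have hd' : 0 < ‖y - p‖ := by
      rw [norm_pos_iff, sub_ne_zero]; exact hyp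
    have hsep : ∀ k ∈ K, ⟪y - p, k - p⟫_ℝ ≤ 0 := by
      refine aux_nearest_inner_le hKconv hpK (fun k hk => ?_)
      rw [← hpd]; exact Metric.infDist_le_dist_of_mem hk
    set u : EuclideanSpace ℝ (Fin n) := ‖y - p‖⁻¹ • (y - p) with hudef
    have hu : ‖u‖ = 1 := by
      rw [hudef, norm_smul, norm_inv, Real.norm_eq_abs, abs_of_pos hd',
        inv_mul_cancel₀ hd'.ne']
    set z : EuclideanSpace ℝ (Fin n) := r • u with hzdef
    have hzr : z ∈ Metric.closedBall (0 : EuclideanSpace ℝ (Fin n)) r := by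
      rw [Metric.mem_closedBall, dist_zero_right, hzdef, norm_smul, hu,
        Real.norm_eq_abs, abs_of_pos hr, mul_one]
    have hzL : z ∈ L := hballL hzr
    have hyn : ‖y‖ ≤ r / 2 := by
      simpa [Metric.mem_closedBall, dist_zero_right] using hy
    have hkey : ∀ k ∈ K, r / 2 + ‖y - p‖ ≤ dist z k := by
      intro k hk
      have huz : ⟪u, z⟫_ℝ = r := by
        rw [hzdef, real_inner_smul_right, real_inner_self_eq_norm_sq, hu]; ring
      have hukp : ⟪u, k - p⟫_ℝ ≤ 0 := by
        rw [hudef, real_inner_smul_left]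
        exact mul_nonpos_of_nonneg_of_nonpos (inv_nonneg.2 (norm_nonneg _)) (hsep k hk)
      have huyp : ⟪u, y - p⟫_ℝ = ‖y - p‖ := by
        rw [hudef, real_inner_smul_left, real_inner_self_eq_norm_sq]
        field_simp
      have huy : ⟪u, y⟫_ℝ ≤ r / 2 := by
        calc ⟪u, y⟫_ℝ ≤ ‖u‖ * ‖y‖ := real_inner_le_norm _ _
          _ ≤ r / 2 := by rw [hu, one_mul]; exact hyn
      have hup : ⟪u, p⟫_ℝ ≤ r / 2 - ‖y - p‖ := by
        have : ⟪u, p⟫_ℝ = ⟪u, y⟫_ℝ - ⟪u, y - p⟫_ℝ := by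
          rw [inner_sub_right]; ring
        rw [this, huyp]; linarith
      have hinner : r / 2 + ‖y - p‖ ≤ ⟪u, z - k⟫_ℝ := by
        have e : ⟪u, z - k⟫_ℝ = ⟪u, z⟫_ℝ - ⟪u, k - p⟫_ℝ - ⟪u, p⟫_ℝ := by
          rw [inner_sub_right, inner_sub_right]; ring
        rw [e, huz]; linarith
      calc r / 2 + ‖y - p‖ ≤ ⟪u, z - k⟫_ℝ := hinner
        _ ≤ ‖u‖ * ‖z - k‖ := real_inner_le_norm _ _
        _ = dist z k := by rw [hu, one_mul, dist_eq_norm]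
    obtain ⟨k, hkK, hkd⟩ := hKcomp.exists_infDist_eq_dist hKne z
    have h1 : Metric.infDist z K ≤ d0 := hdist z hzL
    have h2 : r / 2 + ‖y - p‖ ≤ Metric.infDist z K := hkd ▸ hkey k hkK
    linarith
  have h0K : (0 : EuclideanSpace ℝ (Fin n)) ∈ K := hball2 (by simp; positivity)
  refine ⟨δ, hδ, ?_, ?_⟩
  -- L ⊆ (1+δ) • K
  · intro x hx
    obtain ⟨k, hkK, hkd⟩ := hKcomp.exists_infDist_eq_dist hKne x
    have hxk : ‖x - k‖ ≤ d0 := by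
      rw [← dist_eq_norm, ← hkd]; exact hdist x hx
    have hvK : δ⁻¹ • (x - k) ∈ K := by
      apply hball2
      rw [Metric.mem_closedBall, dist_zero_right, norm_smul, norm_inv,
        Real.norm_eq_abs, abs_of_pos hδ, inv_mul_le_iff₀ hδ]
      calc ‖x - k‖ ≤ d0 := hxk
        _ ≤ δ * (r / 2) := hd0δ
    have h1δ : (0 : ℝ) < 1 + δ := by linarith
    have hmem : (1 + δ)⁻¹ • x ∈ K := by
      have h1δne : (1 + δ : ℝ) ≠ 0 := h1δ.ne'
      have hcomb : ((1 + δ)⁻¹) • k + (δ * (1 + δ)⁻¹) • (δ⁻¹ • (x - k)) = (1 + δ)⁻¹ • x := by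
        rw [smul_smul]
        have h : δ * (1 + δ)⁻¹ * δ⁻¹ = (1 + δ)⁻¹ := by
          field_simp
        rw [h, ← smul_add]
        congr 1
        abel
      have := hKconv hkK hvK (show (0:ℝ) ≤ (1 + δ)⁻¹ by positivity)
        (show (0:ℝ) ≤ δ * (1 + δ)⁻¹ by positivity)
        (show (1 + δ)⁻¹ + δ * (1 + δ)⁻¹ = 1 by field_simp)
      rwa [hcomb] at this
    exact ⟨(1 + δ)⁻¹ • x, hmem, smul_inv_smul₀ h1δ.ne' x⟩
  -- volume bound
  · have h1δ : (0 : ℝ) < 1 + δ := by linarith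
    have hKsub : K ⊆ (1 + δ) • K := by
      intro k hk
      have hmem : (1 + δ)⁻¹ • k ∈ K := by
        have hcomb : ((1 + δ)⁻¹) • k + (1 - (1 + δ)⁻¹) • (0 : EuclideanSpace ℝ (Fin n)) = (1 + δ)⁻¹ • k := by
          rw [smul_zero, add_zero]
        have h01 : (1 + δ)⁻¹ ≤ 1 := by
          rw [inv_le_one_iff₀]; right; linarith
        have := hKconv hk h0K (show (0:ℝ) ≤ (1 + δ)⁻¹ by positivity)
          (show (0:ℝ) ≤ 1 - (1 + δ)⁻¹ by linarith)
          (show (1 + δ)⁻¹ + (1 - (1 + δ)⁻¹) = 1 by ring)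
        rwa [hcomb] at this
      exact ⟨(1 + δ)⁻¹ • k, hmem, smul_inv_smul₀ h1δ.ne' k⟩
    have hKm : NullMeasurableSet K volume :=
      hKcomp.isClosed.measurableSet.nullMeasurableSet
    have hKfin : volume K ≠ ⊤ := hKcomp.measure_lt_top.ne
    have hsmul : volume ((1 + δ) • K) = ENNReal.ofReal ((1 + δ) ^ n) * volume K := by
      rw [MeasureTheory.Measure.addHaar_smul_of_nonneg volume h1δ.le K,
        finrank_euclideanSpace_fin]
    calc volume ((1 + δ) • K \ L)
        ≤ volume ((1 + δ) • K \ K) := measure_mono (Set.diff_subset_diff_right hKL)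
      _ = volume ((1 + δ) • K) - volume K := measure_diff hKsub hKm hKfin
      _ = ENNReal.ofReal ((1 + δ) ^ n) * volume K - 1 * volume K := by
          rw [hsmul, one_mul]
      _ = (ENNReal.ofReal ((1 + δ) ^ n) - 1) * volume K := by
          rw [ENNReal.sub_mul (fun _ _ => hKfin)]
      _ = ENNReal.ofReal ((1 + δ) ^ n - 1) * volume K := by
          rw [ENNReal.ofReal_sub _ zero_le_one, ENNReal.ofReal_one]
      _ ≤ ENNReal.ofReal ((1 + δ) ^ n - 1) * V := by
          exact mul_le_mul_right (measure_mono (hKL.trans hLR)) _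
      _ < ENNReal.ofReal β := hδV
end
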